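/- Let G be a finite simple graph of order n with maximum degree Δ. If n is even, then c^A_g(G) ≤ n/2 + 2Δ and c^I_g(G) ≤ n/2 + 3Δ (as real numbers). If n is odd, then c^A_g(G) ≤ n/2 + 3Δ and c^I_g(G) ≤ n/2 + 2Δ (as real numbers). -/
import Mathlib


open SimpleGraph

/-- The balance score of a state `(S0, S1)` in a graph `G`: the number of edges of `G` with
one endpoint in `S0` and the other in `S1`, minus the number of edges with both endpoints
in `S0` or both endpoints in `S1`. -/
noncomputable def bscore {V : Type*} (G : SimpleGraph V) (S0 S1 : Set V) : ℤ :=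
  ({e ∈ G.edgeSet | ∃ u ∈ S0, ∃ v ∈ S1, e = s(u, v)}.ncard : ℤ) -
  ({e ∈ G.edgeSet | (∃ u ∈ S0, ∃ v ∈ S0, e = s(u, v)) ∨
      (∃ u ∈ S1, ∃ v ∈ S1, e = s(u, v))}.ncard : ℤ)

/-- The value of the balance game computed by backward induction, with `k` moves remaining.
`t = true` means it is Admirable's (the minimizer's) turn, `t = false` means it is
Impish's (the maximizer's) turn.  `S0` is the set of vertices selected by Admirable so far,
`S1` the set selected by Impish. -/
noncomputable def gameVal {V : Type*} [Fintype V] (G : SimpleGraph V) :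
    ℕ → Bool → Finset V → Finset V → ℤ
  | 0, _, S0, S1 => bscore G ↑S0 ↑S1
  | (k + 1), t, S0, S1 =>
    letI := Classical.decEq V
    if h : (Finset.univ \ (S0 ∪ S1)).Nonempty then
      if t then (Finset.univ \ (S0 ∪ S1)).inf' h fun v => gameVal G k false (insert v S0) S1
      else (Finset.univ \ (S0 ∪ S1)).sup' h fun v => gameVal G k true S0 (insert v S1)
    else bscore G ↑S0 ↑S1

/-- The (A)-start game balance number `b^A_g(G)`. -/
noncomputable def balA {V : Type*} [Fintype V] (G : SimpleGraph V) : ℤ :=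
  gameVal G (Fintype.card V) true ∅ ∅

/-- The (I)-start game balance number `b^I_g(G)`. -/
noncomputable def balI {V : Type*} [Fintype V] (G : SimpleGraph V) : ℤ :=
  gameVal G (Fintype.card V) false ∅ ∅

/-- The value of the cordiality game computed by backward induction (final score is
`|bscore|`), with `k` moves remaining; `t = true` means it is Admirable's turn. -/
noncomputable def cordVal {V : Type*} [Fintype V] (G : SimpleGraph V) :
    ℕ → Bool → Finset V → Finset V → ℤ
  | 0, _, S0, S1 => |bscore G ↑S0 ↑S1|
  | (k + 1), t, S0, S1 =>
    letI := Classical.decEq V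
    if h : (Finset.univ \ (S0 ∪ S1)).Nonempty then
      if t then (Finset.univ \ (S0 ∪ S1)).inf' h fun v => cordVal G k false (insert v S0) S1
      else (Finset.univ \ (S0 ∪ S1)).sup' h fun v => cordVal G k true S0 (insert v S1)
    else |bscore G ↑S0 ↑S1|

/-- The (A)-start game cordiality number `c^A_g(G)`. -/
noncomputable def cordA {V : Type*} [Fintype V] (G : SimpleGraph V) : ℤ :=
  cordVal G (Fintype.card V) true ∅ ∅

/-- The (I)-start game cordiality number `c^I_g(G)`. -/
noncomputable def cordI {V : Type*} [Fintype V] (G : SimpleGraph V) : ℤ :=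
  cordVal G (Fintype.card V) false ∅ ∅

namespace CordAux

variable {V : Type*} (G : SimpleGraph V)

noncomputable def nb (S : Set V) (v : V) : ℤ := ({u ∈ S | G.Adj v u}.ncard : ℤ)

def cutS (S0 S1 : Set V) : Set (Sym2 V) := {e ∈ G.edgeSet | ∃ u ∈ S0, ∃ v ∈ S1, e = s(u, v)}

def badS (S0 S1 : Set V) : Set (Sym2 V) := {e ∈ G.edgeSet | (∃ u ∈ S0, ∃ v ∈ S0, e = s(u, v)) ∨
      (∃ u ∈ S1, ∃ v ∈ S1, e = s(u, v))}

lemma bscore_eq (S0 S1 : Set V) :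
    bscore G S0 S1 = ((cutS G S0 S1).ncard : ℤ) - ((badS G S0 S1).ncard : ℤ) := rfl

lemma cutS_symm (S0 S1 : Set V) : cutS G S0 S1 = cutS G S1 S0 := by
  ext e
  simp only [cutS, Set.mem_setOf_eq]
  constructor
  · rintro ⟨he, u, hu, v, hv, rfl⟩; exact ⟨he, v, hv, u, hu, Sym2.eq_swap⟩
  · rintro ⟨he, u, hu, v, hv, rfl⟩; exact ⟨he, v, hv, u, hu, Sym2.eq_swap⟩

lemma badS_symm (S0 S1 : Set V) : badS G S0 S1 = badS G S1 S0 := by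
  ext e
  simp only [badS, Set.mem_setOf_eq]
  constructor
  · rintro ⟨he, h | h⟩
    exacts [⟨he, Or.inr h⟩, ⟨he, Or.inl h⟩]
  · rintro ⟨he, h | h⟩
    exacts [⟨he, Or.inr h⟩, ⟨he, Or.inl h⟩]

lemma bscore_symm (S0 S1 : Set V) : bscore G S0 S1 = bscore G S1 S0 := by
  rw [bscore_eq, bscore_eq, cutS_symm, badS_symm]

lemma cutS_insert_left (S0 S1 : Set V) (x : V) (h0 : x ∉ S0) (h1 : x ∉ S1) :
    cutS G (insert x S0) S1 = cutS G S0 S1 ∪ (fun w => s(x, w)) '' {w ∈ S1 | G.Adj x w} := by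
  ext e
  simp only [cutS, Set.mem_setOf_eq, Set.mem_union, Set.mem_image, Set.mem_insert_iff]
  constructor
  · rintro ⟨he, u, (rfl | hu), v, hv, rfl⟩
    · exact Or.inr ⟨v, ⟨hv, (G.mem_edgeSet).1 he⟩, rfl⟩
    · exact Or.inl ⟨he, u, hu, v, hv, rfl⟩
  · rintro (⟨he, u, hu, v, hv, rfl⟩ | ⟨w, ⟨hw, hadj⟩, rfl⟩)
    · exact ⟨he, u, Or.inr hu, v, hv, rfl⟩
    · exact ⟨(G.mem_edgeSet).2 hadj, x, Or.inl rfl, w, hw, rfl⟩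

lemma cutS_disj_left (S0 S1 : Set V) (x : V) (h0 : x ∉ S0) (h1 : x ∉ S1) :
    Disjoint (cutS G S0 S1) ((fun w => s(x, w)) '' {w ∈ S1 | G.Adj x w}) := by
  rw [Set.disjoint_left]
  rintro e ⟨he, u, hu, v, hv, rfl⟩ ⟨w, ⟨hw, hadj⟩, heq⟩
  rcases Sym2.eq_iff.1 heq with ⟨rfl, rfl⟩ | ⟨rfl, rfl⟩
  · exact h0 hu
  · exact h1 hv

lemma badS_insert_left (S0 S1 : Set V) (x : V) (h0 : x ∉ S0) (h1 : x ∉ S1) :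
    badS G (insert x S0) S1 = badS G S0 S1 ∪ (fun w => s(x, w)) '' {w ∈ S0 | G.Adj x w} := by
  ext e
  simp only [badS, Set.mem_setOf_eq, Set.mem_union, Set.mem_image, Set.mem_insert_iff]
  constructor
  · rintro ⟨he, ⟨u, (rfl | hu), v, (rfl | hv), rfl⟩ | h2⟩
    · exact absurd ((G.mem_edgeSet).1 he) (G.irrefl)
    · exact Or.inr ⟨v, ⟨hv, (G.mem_edgeSet).1 he⟩, rfl⟩
    · exact Or.inr ⟨u, ⟨hu, ((G.mem_edgeSet).1 he).symm⟩, Sym2.eq_swap⟩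
    · exact Or.inl ⟨he, Or.inl ⟨u, hu, v, hv, rfl⟩⟩
    · exact Or.inl ⟨he, Or.inr h2⟩
  · rintro (⟨he, ⟨u, hu, v, hv, rfl⟩ | h2⟩ | ⟨w, ⟨hw, hadj⟩, rfl⟩)
    · exact ⟨he, Or.inl ⟨u, Or.inr hu, v, Or.inr hv, rfl⟩⟩
    · exact ⟨he, Or.inr h2⟩
    · exact ⟨(G.mem_edgeSet).2 hadj, Or.inl ⟨x, Or.inl rfl, w, Or.inr hw, rfl⟩⟩

lemma badS_disj_left (S0 S1 : Set V) (x : V) (h0 : x ∉ S0) (h1 : x ∉ S1) :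
    Disjoint (badS G S0 S1) ((fun w => s(x, w)) '' {w ∈ S0 | G.Adj x w}) := by
  rw [Set.disjoint_left]
  rintro e ⟨he, ⟨u, hu, v, hv, rfl⟩ | ⟨u, hu, v, hv, rfl⟩⟩ ⟨w, ⟨hw, hadj⟩, heq⟩ <;>
    rcases Sym2.eq_iff.1 heq with ⟨rfl, rfl⟩ | ⟨rfl, rfl⟩
  · exact h0 hu
  · exact h0 hv
  · exact h1 hu
  · exact h1 hv

lemma ncard_image_pair (T : Set V) (x : V) :
    ((fun w => s(x, w)) '' T).ncard = T.ncard :=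
  Set.ncard_image_of_injOn (fun a _ b _ h => Sym2.congr_right.1 h)

lemma bscore_insert_left [Fintype V] (S0 S1 : Set V) (x : V) (h0 : x ∉ S0) (h1 : x ∉ S1) :
    bscore G (insert x S0) S1 = bscore G S0 S1 + nb G S1 x - nb G S0 x := by
  rw [bscore_eq, bscore_eq, cutS_insert_left G S0 S1 x h0 h1, badS_insert_left G S0 S1 x h0 h1,
    Set.ncard_union_eq (cutS_disj_left G S0 S1 x h0 h1) (Set.toFinite _) (Set.toFinite _),
    Set.ncard_union_eq (badS_disj_left G S0 S1 x h0 h1) (Set.toFinite _) (Set.toFinite _),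
    ncard_image_pair, ncard_image_pair]
  unfold nb
  push_cast
  ring

lemma bscore_insert_right [Fintype V] (S0 S1 : Set V) (x : V) (h0 : x ∉ S0) (h1 : x ∉ S1) :
    bscore G S0 (insert x S1) = bscore G S0 S1 + nb G S0 x - nb G S1 x := by
  rw [bscore_symm, bscore_insert_left G S1 S0 x h1 h0, bscore_symm]


section Fin
variable [Fintype V]

lemma nb_le_degree [DecidableRel G.Adj] (S : Set V) (v : V) :
    nb G S v ≤ G.degree v := by
  have h2 : {u ∈ S | G.Adj v u}.ncard ≤ (G.neighborSet v).ncard :=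
    Set.ncard_le_ncard (fun u hu => hu.2) (Set.toFinite _)
  have h3 : (G.neighborSet v).ncard = G.degree v := by
    rw [Set.ncard_eq_toFinset_card']
    simp [SimpleGraph.degree, SimpleGraph.neighborFinset]
  unfold nb
  exact_mod_cast le_trans h2 (le_of_eq h3)

lemma nb_nonneg (S : Set V) (v : V) : 0 ≤ nb G S v := Int.natCast_nonneg _

lemma nb_le_maxDegree [DecidableRel G.Adj] (S : Set V) (v : V) :
    nb G S v ≤ (G.maxDegree : ℤ) := le_trans (nb_le_degree G S v)
    (by exact_mod_cast G.degree_le_maxDegree v)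

lemma nb_insert_le (S : Set V) (x v : V) (hx : x ∉ S) :
    nb G S v ≤ nb G (insert x S) v ∧ nb G (insert x S) v ≤ nb G S v + 1 := by
  classical
  unfold nb
  by_cases h : G.Adj v x
  · have he : {u ∈ insert x S | G.Adj v u} = insert x {u ∈ S | G.Adj v u} := by
      ext u; simp only [Set.mem_insert_iff, Set.mem_setOf_eq]
      constructor
      · rintro ⟨(rfl | hu), hadj⟩
        · exact Or.inl rfl
        · exact Or.inr ⟨hu, hadj⟩
      · rintro (rfl | ⟨hu, hadj⟩)
        · exact ⟨Or.inl rfl, h⟩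
        · exact ⟨Or.inr hu, hadj⟩
    rw [he, Set.ncard_insert_of_notMem (fun hc => hx hc.1) (Set.toFinite _)]
    push_cast; omega
  · have he : {u ∈ insert x S | G.Adj v u} = {u ∈ S | G.Adj v u} := by
      ext u; simp only [Set.mem_insert_iff, Set.mem_setOf_eq]
      constructor
      · rintro ⟨(rfl | hu), hadj⟩
        · exact absurd hadj h
        · exact ⟨hu, hadj⟩
      · rintro ⟨hu, hadj⟩; exact ⟨Or.inr hu, hadj⟩
    rw [he]; omega

variable [DecidableRel G.Adj] [DecidableEq V]

lemma bscoreF_insert_left (S0 S1 : Finset V) (x : V) (h0 : x ∉ S0) (h1 : x ∉ S1) :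
    bscore G ↑(insert x S0) ↑S1 = bscore G ↑S0 ↑S1 + nb G ↑S1 x - nb G ↑S0 x := by
  rw [Finset.coe_insert]
  exact bscore_insert_left G ↑S0 ↑S1 x (by simpa) (by simpa)

lemma bscoreF_insert_right (S0 S1 : Finset V) (x : V) (h0 : x ∉ S0) (h1 : x ∉ S1) :
    bscore G ↑S0 ↑(insert x S1) = bscore G ↑S0 ↑S1 + nb G ↑S0 x - nb G ↑S1 x := by
  rw [Finset.coe_insert]
  exact bscore_insert_right G ↑S0 ↑S1 x (by simpa) (by simpa)

lemma nbF_insert_le (S : Finset V) (x v : V) (hx : x ∉ S) :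
    nb G ↑S v ≤ nb G ↑(insert x S) v ∧ nb G ↑(insert x S) v ≤ nb G ↑S v + 1 := by
  rw [Finset.coe_insert]
  exact nb_insert_le G ↑S x v (by simpa)

lemma abs_bscore_insert_left (S0 S1 : Finset V) (x : V) (h0 : x ∉ S0) (h1 : x ∉ S1) :
    |bscore G ↑(insert x S0) ↑S1| ≤ |bscore G ↑S0 ↑S1| + (G.maxDegree : ℤ) := by
  rw [bscoreF_insert_left G S0 S1 x h0 h1]
  have h1' := nb_nonneg G (↑S0 : Set V) x
  have h2' := nb_nonneg G (↑S1 : Set V) x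
  have h3' := nb_le_maxDegree G (↑S0 : Set V) x
  have h4' := nb_le_maxDegree G (↑S1 : Set V) x
  have heq : bscore G ↑S0 ↑S1 + nb G ↑S1 x - nb G ↑S0 x
      = bscore G ↑S0 ↑S1 + (nb G ↑S1 x - nb G ↑S0 x) := by ring
  rw [heq]
  refine le_trans (abs_add_le _ _) ?_
  have : |nb G ↑S1 x - nb G ↑S0 x| ≤ (G.maxDegree : ℤ) := abs_le.2 ⟨by omega, by omega⟩
  omega

lemma abs_bscore_insert_right (S0 S1 : Finset V) (x : V) (h0 : x ∉ S0) (h1 : x ∉ S1) :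
    |bscore G ↑S0 ↑(insert x S1)| ≤ |bscore G ↑S0 ↑S1| + (G.maxDegree : ℤ) := by
  rw [bscoreF_insert_right G S0 S1 x h0 h1]
  have h1' := nb_nonneg G (↑S0 : Set V) x
  have h2' := nb_nonneg G (↑S1 : Set V) x
  have h3' := nb_le_maxDegree G (↑S0 : Set V) x
  have h4' := nb_le_maxDegree G (↑S1 : Set V) x
  have heq : bscore G ↑S0 ↑S1 + nb G ↑S0 x - nb G ↑S1 x
      = bscore G ↑S0 ↑S1 + (nb G ↑S0 x - nb G ↑S1 x) := by ring
  rw [heq]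
  refine le_trans (abs_add_le _ _) ?_
  have : |nb G ↑S0 x - nb G ↑S1 x| ≤ (G.maxDegree : ℤ) := abs_le.2 ⟨by omega, by omega⟩
  omega

open Finset in
lemma exists_round_move (S0 S1 : Finset V) (hU : (univ \ (S0 ∪ S1)).Nonempty) :
    ∃ x ∈ univ \ (S0 ∪ S1), ∀ w ∈ univ \ (insert x S0 ∪ S1),
      |bscore G ↑(insert x S0) ↑(insert w S1)| ≤
        max |bscore G ↑S0 ↑S1| (2 * (G.maxDegree : ℤ)) + 1 := by
  have hD0 : (0:ℤ) ≤ (G.maxDegree : ℤ) := Int.natCast_nonneg _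
  by_cases hsign : 0 ≤ bscore G ↑S0 ↑S1
  · obtain ⟨x, hxU, hxmin⟩ := (univ \ (S0 ∪ S1)).exists_min_image
      (fun v => nb G ↑S1 v - nb G ↑S0 v) hU
    refine ⟨x, hxU, fun w hw => ?_⟩
    have hx0 : x ∉ S0 := fun h => (mem_sdiff.1 hxU).2 (mem_union_left _ h)
    have hx1 : x ∉ S1 := fun h => (mem_sdiff.1 hxU).2 (mem_union_right _ h)
    have hw0' : w ∉ insert x S0 := fun h => (mem_sdiff.1 hw).2 (mem_union_left _ h)
    have hw1 : w ∉ S1 := fun h => (mem_sdiff.1 hw).2 (mem_union_right _ h)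
    have hw0 : w ∉ S0 := fun h => hw0' (mem_insert_of_mem h)
    have hwU : w ∈ univ \ (S0 ∪ S1) := by
      rw [mem_sdiff, mem_union]
      exact ⟨mem_univ _, fun h => h.elim (fun h' => hw0 h') (fun h' => hw1 h')⟩
    have hmin := hxmin w hwU
    have e2 : bscore G ↑(insert x S0) ↑(insert w S1) =
        bscore G ↑S0 ↑S1 + (nb G ↑S1 x - nb G ↑S0 x)
          + nb G ↑(insert x S0) w - nb G ↑S1 w := by
      rw [bscoreF_insert_right G (insert x S0) S1 w hw0' hw1,
        bscoreF_insert_left G S0 S1 x hx0 hx1]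
      ring
    have hins := nbF_insert_le G S0 x w hx0
    have b1 := nb_nonneg G (↑S1 : Set V) x
    have b2 := nb_le_maxDegree G (↑S0 : Set V) x
    have b3 := nb_nonneg G (↑S0 : Set V) w
    have b4 := nb_le_maxDegree G (↑S1 : Set V) w
    have b5 := nb_nonneg G (↑S1 : Set V) w
    have hM1 : bscore G ↑S0 ↑S1 ≤ max |bscore G ↑S0 ↑S1| (2 * (G.maxDegree : ℤ)) :=
      le_trans (le_abs_self _) (le_max_left _ _)
    have hM2 : 2 * (G.maxDegree : ℤ) ≤ max |bscore G ↑S0 ↑S1| (2 * (G.maxDegree : ℤ)) :=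
      le_max_right _ _
    rw [abs_le]
    constructor
    · rw [e2]; linarith
    · rw [e2]; linarith
  · obtain ⟨x, hxU, hxmax⟩ := (univ \ (S0 ∪ S1)).exists_max_image
      (fun v => nb G ↑S1 v - nb G ↑S0 v) hU
    refine ⟨x, hxU, fun w hw => ?_⟩
    have hx0 : x ∉ S0 := fun h => (mem_sdiff.1 hxU).2 (mem_union_left _ h)
    have hx1 : x ∉ S1 := fun h => (mem_sdiff.1 hxU).2 (mem_union_right _ h)
    have hw0' : w ∉ insert x S0 := fun h => (mem_sdiff.1 hw).2 (mem_union_left _ h)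
    have hw1 : w ∉ S1 := fun h => (mem_sdiff.1 hw).2 (mem_union_right _ h)
    have hw0 : w ∉ S0 := fun h => hw0' (mem_insert_of_mem h)
    have hwU : w ∈ univ \ (S0 ∪ S1) := by
      rw [mem_sdiff, mem_union]
      exact ⟨mem_univ _, fun h => h.elim (fun h' => hw0 h') (fun h' => hw1 h')⟩
    have hmax := hxmax w hwU
    have e2 : bscore G ↑(insert x S0) ↑(insert w S1) =
        bscore G ↑S0 ↑S1 + (nb G ↑S1 x - nb G ↑S0 x)
          + nb G ↑(insert x S0) w - nb G ↑S1 w := by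
      rw [bscoreF_insert_right G (insert x S0) S1 w hw0' hw1,
        bscoreF_insert_left G S0 S1 x hx0 hx1]
      ring
    have hins := nbF_insert_le G S0 x w hx0
    have b1 := nb_nonneg G (↑S1 : Set V) x
    have b2 := nb_le_maxDegree G (↑S0 : Set V) x
    have b2' := nb_le_maxDegree G (↑S1 : Set V) x
    have b2'' := nb_nonneg G (↑S0 : Set V) x
    have b3 := nb_nonneg G (↑S0 : Set V) w
    have b3' := nb_le_maxDegree G (↑S0 : Set V) w
    have b4 := nb_le_maxDegree G (↑S1 : Set V) w
    have b5 := nb_nonneg G (↑S1 : Set V) w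
    have habs : |bscore G ↑S0 ↑S1| = -(bscore G ↑S0 ↑S1) := abs_of_neg (by omega)
    have hM1 : -(bscore G ↑S0 ↑S1) ≤ max |bscore G ↑S0 ↑S1| (2 * (G.maxDegree : ℤ)) := by
      rw [← habs]; exact le_max_left _ _
    have hM2 : 2 * (G.maxDegree : ℤ) ≤ max |bscore G ↑S0 ↑S1| (2 * (G.maxDegree : ℤ)) :=
      le_max_right _ _
    rw [abs_le]
    constructor
    · rw [e2]; linarith
    · rw [e2]; linarith

lemma bscore_empty (S : Set V) (hS : S.Subsingleton) : bscore G ∅ S = 0 := by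
  have h1 : cutS G ∅ S = ∅ := by
    ext e; simp [cutS]
  have h2 : badS G ∅ S = ∅ := by
    ext e
    simp only [badS, Set.mem_setOf_eq, Set.mem_empty_iff_false, iff_false, not_exists]
    rintro ⟨he, ⟨u, hu, _⟩ | ⟨u, hu, v, hv, rfl⟩⟩
    · exact hu
    · obtain rfl : u = v := hS hu hv
      exact G.irrefl ((G.mem_edgeSet).1 he)
  rw [bscore_eq, h1, h2]
  simp

open Finset in
lemma card_sdiff_insert_left (S0 S1 : Finset V) (x : V) (hx : x ∈ univ \ (S0 ∪ S1)) :
    (univ \ (insert x S0 ∪ S1)).card + 1 = (univ \ (S0 ∪ S1)).card := by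
  have he : univ \ (insert x S0 ∪ S1) = (univ \ (S0 ∪ S1)).erase x := by
    ext y
    simp only [mem_sdiff, mem_union, mem_insert, mem_erase, mem_univ, true_and]
    tauto
  rw [he, card_erase_of_mem hx]
  have : 0 < (univ \ (S0 ∪ S1)).card := card_pos.2 ⟨x, hx⟩
  omega

open Finset in
lemma card_sdiff_insert_right (S0 S1 : Finset V) (x : V) (hx : x ∈ univ \ (S0 ∪ S1)) :
    (univ \ (S0 ∪ insert x S1)).card + 1 = (univ \ (S0 ∪ S1)).card := by
  have he : univ \ (S0 ∪ insert x S1) = (univ \ (S0 ∪ S1)).erase x := by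
    ext y
    simp only [mem_sdiff, mem_union, mem_insert, mem_erase, mem_univ, true_and]
    tauto
  rw [he, card_erase_of_mem hx]
  have : 0 < (univ \ (S0 ∪ S1)).card := card_pos.2 ⟨x, hx⟩
  omega

end Fin
end CordAux

namespace CordAux
open Finset

variable {V : Type*} [Fintype V] (G : SimpleGraph V) [DecidableRel G.Adj]

/-- One half-round of bookkeeping, shared by the two inductive lemmas. -/
lemma round_aux (S0 S1 : Finset V) : True := trivial

lemma cordVal_even_le (k : ℕ) :
    ∀ S0 S1 : Finset V, Disjoint S0 S1 →
      S0.card + S1.card + 2 * k = Fintype.card V →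
      cordVal G (2 * k) true S0 S1 ≤
        max |bscore G ↑S0 ↑S1| (2 * (G.maxDegree : ℤ)) + k := by
  letI : DecidableEq V := Classical.decEq V
  induction k with
  | zero =>
    intro S0 S1 _ _
    simp only [Nat.mul_zero, cordVal, Nat.cast_zero, add_zero]
    exact le_max_left _ _
  | succ k ih =>
    intro S0 S1 hdisj hcard
    have hcard' : (Finset.univ \ (S0 ∪ S1)).card = 2 * (k + 1) := by
      rw [Finset.card_sdiff_of_subset (Finset.subset_univ _), Finset.card_union_of_disjoint hdisj,
        Finset.card_univ]
      omega
    have hU : (Finset.univ \ (S0 ∪ S1)).Nonempty := Finset.card_pos.1 (by omega)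
    obtain ⟨x, hxU, hround⟩ := exists_round_move G S0 S1 hU
    have hx' := Finset.mem_sdiff.1 hxU
    have hx0 : x ∉ S0 := fun h => hx'.2 (Finset.mem_union_left _ h)
    have hx1 : x ∉ S1 := fun h => hx'.2 (Finset.mem_union_right _ h)
    have hc1 := card_sdiff_insert_left S0 S1 x hxU
    have hU1 : (Finset.univ \ (insert x S0 ∪ S1)).Nonempty := Finset.card_pos.1 (by omega)
    have h2 : 2 * (k + 1) = 2 * k + 1 + 1 := by ring
    rw [h2, cordVal, dif_pos hU, if_pos rfl]
    refine le_trans (Finset.inf'_le _ hxU) ?_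
    rw [cordVal, dif_pos hU1, if_neg (by simp)]
    refine Finset.sup'_le _ _ fun w hw => ?_
    have hw' := Finset.mem_sdiff.1 hw
    have hw0' : w ∉ insert x S0 := fun h => hw'.2 (Finset.mem_union_left _ h)
    have hw1 : w ∉ S1 := fun h => hw'.2 (Finset.mem_union_right _ h)
    have hw0 : w ∉ S0 := fun h => hw0' (Finset.mem_insert_of_mem h)
    have hwx : w ≠ x := fun h => hw0' (h ▸ Finset.mem_insert_self _ _)
    have hd2 : Disjoint (insert x S0) (insert w S1) := by
      rw [Finset.disjoint_left]
      intro a ha hb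
      rcases Finset.mem_insert.1 ha with rfl | ha0
      · rcases Finset.mem_insert.1 hb with h | h
        · exact hwx h.symm
        · exact hx1 h
      · rcases Finset.mem_insert.1 hb with rfl | h
        · exact hw0 ha0
        · exact (Finset.disjoint_left.1 hdisj ha0) h
    have hcx : (insert x S0).card = S0.card + 1 := Finset.card_insert_of_notMem hx0
    have hcw : (insert w S1).card = S1.card + 1 := Finset.card_insert_of_notMem hw1
    refine le_trans (ih (insert x S0) (insert w S1) hd2 (by omega)) ?_
    have hb := hround w hw
    have hD0 : (0:ℤ) ≤ 2 * (G.maxDegree : ℤ) := by positivity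
    have hmax : max |bscore G ↑(insert x S0) ↑(insert w S1)| (2 * (G.maxDegree : ℤ)) ≤
        max |bscore G ↑S0 ↑S1| (2 * (G.maxDegree : ℤ)) + 1 :=
      max_le hb (le_trans (le_max_right |bscore G ↑S0 ↑S1| (2 * (G.maxDegree : ℤ))) (by omega))
    push_cast at hmax ⊢
    linarith

lemma cordVal_odd_le (k : ℕ) :
    ∀ S0 S1 : Finset V, Disjoint S0 S1 →
      S0.card + S1.card + (2 * k + 1) = Fintype.card V →
      cordVal G (2 * k + 1) true S0 S1 ≤
        max |bscore G ↑S0 ↑S1| (2 * (G.maxDegree : ℤ)) + k + (G.maxDegree : ℤ) := by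
  letI : DecidableEq V := Classical.decEq V
  induction k with
  | zero =>
    intro S0 S1 hdisj hcard
    have hcard' : (Finset.univ \ (S0 ∪ S1)).card = 1 := by
      rw [Finset.card_sdiff_of_subset (Finset.subset_univ _), Finset.card_union_of_disjoint hdisj,
        Finset.card_univ]
      omega
    have hU : (Finset.univ \ (S0 ∪ S1)).Nonempty := Finset.card_pos.1 (by omega)
    rw [cordVal, dif_pos hU, if_pos rfl]
    obtain ⟨x, hx⟩ := hU
    refine le_trans (Finset.inf'_le _ hx) ?_
    simp only [Nat.mul_zero, cordVal, Nat.cast_zero, add_zero]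
    have hx' := Finset.mem_sdiff.1 hx
    have hx0 : x ∉ S0 := fun h => hx'.2 (Finset.mem_union_left _ h)
    have hx1 : x ∉ S1 := fun h => hx'.2 (Finset.mem_union_right _ h)
    have hb := abs_bscore_insert_left G S0 S1 x hx0 hx1
    have hm := le_max_left |bscore G ↑S0 ↑S1| (2 * (G.maxDegree : ℤ))
    linarith
  | succ k ih =>
    intro S0 S1 hdisj hcard
    have hcard' : (Finset.univ \ (S0 ∪ S1)).card = 2 * (k + 1) + 1 := by
      rw [Finset.card_sdiff_of_subset (Finset.subset_univ _), Finset.card_union_of_disjoint hdisj,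
        Finset.card_univ]
      omega
    have hU : (Finset.univ \ (S0 ∪ S1)).Nonempty := Finset.card_pos.1 (by omega)
    obtain ⟨x, hxU, hround⟩ := exists_round_move G S0 S1 hU
    have hx' := Finset.mem_sdiff.1 hxU
    have hx0 : x ∉ S0 := fun h => hx'.2 (Finset.mem_union_left _ h)
    have hx1 : x ∉ S1 := fun h => hx'.2 (Finset.mem_union_right _ h)
    have hc1 := card_sdiff_insert_left S0 S1 x hxU
    have hU1 : (Finset.univ \ (insert x S0 ∪ S1)).Nonempty := Finset.card_pos.1 (by omega)
    have h2 : 2 * (k + 1) + 1 = (2 * k + 1) + 1 + 1 := by ring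
    rw [h2, cordVal, dif_pos hU, if_pos rfl]
    refine le_trans (Finset.inf'_le _ hxU) ?_
    rw [cordVal, dif_pos hU1, if_neg (by simp)]
    refine Finset.sup'_le _ _ fun w hw => ?_
    have hw' := Finset.mem_sdiff.1 hw
    have hw0' : w ∉ insert x S0 := fun h => hw'.2 (Finset.mem_union_left _ h)
    have hw1 : w ∉ S1 := fun h => hw'.2 (Finset.mem_union_right _ h)
    have hw0 : w ∉ S0 := fun h => hw0' (Finset.mem_insert_of_mem h)
    have hwx : w ≠ x := fun h => hw0' (h ▸ Finset.mem_insert_self _ _)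
    have hd2 : Disjoint (insert x S0) (insert w S1) := by
      rw [Finset.disjoint_left]
      intro a ha hb
      rcases Finset.mem_insert.1 ha with rfl | ha0
      · rcases Finset.mem_insert.1 hb with h | h
        · exact hwx h.symm
        · exact hx1 h
      · rcases Finset.mem_insert.1 hb with rfl | h
        · exact hw0 ha0
        · exact (Finset.disjoint_left.1 hdisj ha0) h
    have hcx : (insert x S0).card = S0.card + 1 := Finset.card_insert_of_notMem hx0
    have hcw : (insert w S1).card = S1.card + 1 := Finset.card_insert_of_notMem hw1
    refine le_trans (ih (insert x S0) (insert w S1) hd2 (by omega)) ?_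
    have hb := hround w hw
    have hD0 : (0:ℤ) ≤ 2 * (G.maxDegree : ℤ) := by positivity
    have hmax : max |bscore G ↑(insert x S0) ↑(insert w S1)| (2 * (G.maxDegree : ℤ)) ≤
        max |bscore G ↑S0 ↑S1| (2 * (G.maxDegree : ℤ)) + 1 :=
      max_le hb (le_trans (le_max_right |bscore G ↑S0 ↑S1| (2 * (G.maxDegree : ℤ))) (by omega))
    push_cast at hmax ⊢
    linarith

lemma cordVal_odd_false_le (k : ℕ) (S0 S1 : Finset V) (hdisj : Disjoint S0 S1)
    (hcard : S0.card + S1.card + (2 * k + 1) = Fintype.card V) :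
    cordVal G (2 * k + 1) false S0 S1 ≤
      max (|bscore G ↑S0 ↑S1| + (G.maxDegree : ℤ)) (2 * (G.maxDegree : ℤ)) + k := by
  letI : DecidableEq V := Classical.decEq V
  have hcard' : (Finset.univ \ (S0 ∪ S1)).card = 2 * k + 1 := by
    rw [Finset.card_sdiff_of_subset (Finset.subset_univ _), Finset.card_union_of_disjoint hdisj,
      Finset.card_univ]
    omega
  have hU : (Finset.univ \ (S0 ∪ S1)).Nonempty := Finset.card_pos.1 (by omega)
  rw [cordVal, dif_pos hU, if_neg (by simp)]
  refine Finset.sup'_le _ _ fun w hw => ?_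
  have hw' := Finset.mem_sdiff.1 hw
  have hw0 : w ∉ S0 := fun h => hw'.2 (Finset.mem_union_left _ h)
  have hw1 : w ∉ S1 := fun h => hw'.2 (Finset.mem_union_right _ h)
  have hd2 : Disjoint S0 (insert w S1) := by
    rw [Finset.disjoint_left]
    intro a ha hb
    rcases Finset.mem_insert.1 hb with rfl | h
    · exact hw0 ha
    · exact (Finset.disjoint_left.1 hdisj ha) h
  have hcw : (insert w S1).card = S1.card + 1 := Finset.card_insert_of_notMem hw1
  refine le_trans (cordVal_even_le G k S0 (insert w S1) hd2 (by omega)) ?_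
  have hb := abs_bscore_insert_right G S0 S1 w hw0 hw1
  have hmax : max |bscore G ↑S0 ↑(insert w S1)| (2 * (G.maxDegree : ℤ)) ≤
      max (|bscore G ↑S0 ↑S1| + (G.maxDegree : ℤ)) (2 * (G.maxDegree : ℤ)) :=
    max_le (le_trans hb (le_max_left _ _)) (le_max_right _ _)
  linarith

lemma cordVal_even_false_le (k : ℕ) (S0 S1 : Finset V) (hdisj : Disjoint S0 S1)
    (hcard : S0.card + S1.card + (2 * k + 1 + 1) = Fintype.card V) :
    cordVal G (2 * k + 1 + 1) false S0 S1 ≤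
      max (|bscore G ↑S0 ↑S1| + (G.maxDegree : ℤ)) (2 * (G.maxDegree : ℤ)) + k
        + (G.maxDegree : ℤ) := by
  letI : DecidableEq V := Classical.decEq V
  have hcard' : (Finset.univ \ (S0 ∪ S1)).card = 2 * k + 1 + 1 := by
    rw [Finset.card_sdiff_of_subset (Finset.subset_univ _), Finset.card_union_of_disjoint hdisj,
      Finset.card_univ]
    omega
  have hU : (Finset.univ \ (S0 ∪ S1)).Nonempty := Finset.card_pos.1 (by omega)
  rw [cordVal, dif_pos hU, if_neg (by simp)]
  refine Finset.sup'_le _ _ fun w hw => ?_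
  have hw' := Finset.mem_sdiff.1 hw
  have hw0 : w ∉ S0 := fun h => hw'.2 (Finset.mem_union_left _ h)
  have hw1 : w ∉ S1 := fun h => hw'.2 (Finset.mem_union_right _ h)
  have hd2 : Disjoint S0 (insert w S1) := by
    rw [Finset.disjoint_left]
    intro a ha hb
    rcases Finset.mem_insert.1 hb with rfl | h
    · exact hw0 ha
    · exact (Finset.disjoint_left.1 hdisj ha) h
  have hcw : (insert w S1).card = S1.card + 1 := Finset.card_insert_of_notMem hw1
  refine le_trans (cordVal_odd_le G k S0 (insert w S1) hd2 (by omega)) ?_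
  have hb := abs_bscore_insert_right G S0 S1 w hw0 hw1
  have hmax : max |bscore G ↑S0 ↑(insert w S1)| (2 * (G.maxDegree : ℤ)) ≤
      max (|bscore G ↑S0 ↑S1| + (G.maxDegree : ℤ)) (2 * (G.maxDegree : ℤ)) :=
    max_le (le_trans hb (le_max_left _ _)) (le_max_right _ _)
  linarith

end CordAux

theorem statement_14 {V : Type*} [Fintype V] (G : SimpleGraph V) [DecidableRel G.Adj] :
    (Even (Fintype.card V) →
      (cordA G : ℝ) ≤ (Fintype.card V : ℝ) / 2 + 2 * (G.maxDegree : ℝ) ∧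
      (cordI G : ℝ) ≤ (Fintype.card V : ℝ) / 2 + 3 * (G.maxDegree : ℝ)) ∧
    (Odd (Fintype.card V) →
      (cordA G : ℝ) ≤ (Fintype.card V : ℝ) / 2 + 3 * (G.maxDegree : ℝ) ∧
      (cordI G : ℝ) ≤ (Fintype.card V : ℝ) / 2 + 2 * (G.maxDegree : ℝ)) := by
  letI : DecidableEq V := Classical.decEq V
  have hD0 : (0:ℤ) ≤ (G.maxDegree : ℤ) := Int.natCast_nonneg _
  have hDR : (0:ℝ) ≤ (G.maxDegree : ℝ) := by positivity
  have hzero : bscore G (↑(∅ : Finset V)) (↑(∅ : Finset V)) = 0 := by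
    simpa using CordAux.bscore_empty G ∅ Set.subsingleton_empty
  have hdisj0 : Disjoint (∅ : Finset V) (∅ : Finset V) := by simp
  have hc00 : (∅ : Finset V).card = 0 := rfl
  have hmax0 : max |(0:ℤ)| (2 * (G.maxDegree : ℤ)) = 2 * (G.maxDegree : ℤ) := by
    rw [abs_zero]; exact max_eq_right (by positivity)
  have hmaxD : max (|(0:ℤ)| + (G.maxDegree : ℤ)) (2 * (G.maxDegree : ℤ))
      = 2 * (G.maxDegree : ℤ) := by rw [abs_zero]; exact max_eq_right (by omega)
  constructor
  · intro hn
    obtain ⟨k, hk⟩ := hn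
    have hk2 : Fintype.card V = 2 * k := by omega
    have hnR : (Fintype.card V : ℝ) = 2 * (k : ℝ) := by exact_mod_cast hk2
    constructor
    · have hA : cordVal G (2 * k) true ∅ ∅ ≤ 2 * (G.maxDegree : ℤ) + k := by
        refine le_trans (CordAux.cordVal_even_le G k ∅ ∅ hdisj0 (by omega)) ?_
        rw [hzero, hmax0]
      have hcA : cordA G = cordVal G (2 * k) true ∅ ∅ := by rw [cordA, hk2]
      have hZ : cordA G ≤ 2 * (G.maxDegree : ℤ) + k := hcA ▸ hA
      have hR : (cordA G : ℝ) ≤ 2 * (G.maxDegree : ℝ) + (k : ℝ) := by exact_mod_cast hZ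
      rw [hnR]
      linarith
    · rcases Nat.eq_zero_or_pos k with hk0 | hkpos
      · have hn0 : Fintype.card V = 0 := by omega
        have hcI : cordI G = 0 := by
          rw [cordI, hn0]
          simp only [cordVal]
          rw [hzero]
          simp
        rw [hcI]
        push_cast
        positivity
      · obtain ⟨j, rfl⟩ : ∃ j, k = j + 1 := ⟨k - 1, by omega⟩
        have hI : cordVal G (2 * j + 1 + 1) false ∅ ∅ ≤
            3 * (G.maxDegree : ℤ) + j := by
          refine le_trans (CordAux.cordVal_even_false_le G j ∅ ∅ hdisj0 (by omega)) ?_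
          rw [hzero, hmaxD]
          omega
        have hcI : cordI G = cordVal G (2 * j + 1 + 1) false ∅ ∅ := by
          have hn2 : Fintype.card V = 2 * j + 1 + 1 := by omega
          rw [cordI, hn2]
        have hZ : cordI G ≤ 3 * (G.maxDegree : ℤ) + j := hcI ▸ hI
        have hR : (cordI G : ℝ) ≤ 3 * (G.maxDegree : ℝ) + (j : ℝ) := by exact_mod_cast hZ
        have hjR : (Fintype.card V : ℝ) = 2 * (j : ℝ) + 2 := by
          have h : Fintype.card V = 2 * j + 2 := by omega
          exact_mod_cast h
        rw [hjR]
        linarith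
  · intro hn
    obtain ⟨k, hk⟩ := hn
    have hnR : (Fintype.card V : ℝ) = 2 * (k : ℝ) + 1 := by exact_mod_cast hk
    constructor
    · have hA : cordVal G (2 * k + 1) true ∅ ∅ ≤ 3 * (G.maxDegree : ℤ) + k := by
        refine le_trans (CordAux.cordVal_odd_le G k ∅ ∅ hdisj0 (by omega)) ?_
        rw [hzero, hmax0]
        omega
      have hcA : cordA G = cordVal G (2 * k + 1) true ∅ ∅ := by
        rw [cordA, hk]
      have hZ : cordA G ≤ 3 * (G.maxDegree : ℤ) + k := hcA ▸ hA
      have hR : (cordA G : ℝ) ≤ 3 * (G.maxDegree : ℝ) + (k : ℝ) := by exact_mod_cast hZ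
      rw [hnR]
      linarith
    · have hI : cordVal G (2 * k + 1) false ∅ ∅ ≤ 2 * (G.maxDegree : ℤ) + k := by
        refine le_trans (CordAux.cordVal_odd_false_le G k ∅ ∅ hdisj0 (by omega)) ?_
        rw [hzero, hmaxD]
      have hcI : cordI G = cordVal G (2 * k + 1) false ∅ ∅ := by
        rw [cordI, hk]
      have hZ : cordI G ≤ 2 * (G.maxDegree : ℤ) + k := hcI ▸ hI
      have hR : (cordI G : ℝ) ≤ 2 * (G.maxDegree : ℝ) + (k : ℝ) := by exact_mod_cast hZ
      rw [hnR]
      linarith
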